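/- arXiv:1510.07678 — 2 statements merged into one kernel-verified Lean document; each statement's English description precedes it below -/
import Mathlib

section
/- Let C be a pure normal simplicial complex of dimension d−1, let S be a nonempty set of vertices of C, and let F0 be an ordered facet of C such that F0 ∩ S = ∅ and the ordering of F0 is admissible with respect to S. Then there exists an ordered facet F1, adjacent to F0 in the dual graph of C, such that the one-step dual path [F0, F1] is monotone and conservative towards S. -/
/-! Common definitions: pure simplicial complexes (represented by their facet sets),
vertex-distance, links, ordered facets, vectors of distances, admissibility, and
monotone/conservative dual paths, following Adiprasito–Benedetti's combinatorial
segments. -/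

open scoped Classical

noncomputable section

namespace MCP

variable {V : Type} [DecidableEq V] [Fintype V]

/-- The vertex set of the complex whose set of facets is `C`. -/
def verts (C : Finset (Finset V)) : Finset V := C.sup id

/-- `f` is a face of the pure complex with facet set `C`. -/
def IsFace (C : Finset (Finset V)) (f : Finset V) : Prop := ∃ F ∈ C, f ⊆ F

/-- `C` is pure of dimension `d - 1`: every facet has `d` vertices. -/
def Pure (C : Finset (Finset V)) (d : ℕ) : Prop := ∀ F ∈ C, F.card = d

/-- The 1-skeleton of the complex: two vertices are joined iff they lie in a common facet. -/
def skeleton (C : Finset (Finset V)) : SimpleGraph V where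
  Adj u v := u ≠ v ∧ ∃ F ∈ C, u ∈ F ∧ v ∈ F
  symm := by
    constructor
    rintro u v ⟨h, F, hF, hu, hv⟩
    exact ⟨h.symm, F, hF, hv, hu⟩
  loopless := by constructor; rintro u ⟨h, -⟩; exact h rfl

/-- Two facets are adjacent in the dual graph iff they differ in a single vertex. -/
def AdjFacets (F G : Finset V) : Prop :=
  F ≠ G ∧ F.card = G.card ∧ (F ∩ G).card + 1 = F.card

/-- A dual path: a list of facets of `C` in which consecutive facets are adjacent. -/
def IsDualPath (C : Finset (Finset V)) (P : List (Finset V)) : Prop :=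
  (∀ F ∈ P, F ∈ C) ∧ P.Chain' AdjFacets

/-- `C` is normal: for every face `f`, any two facets containing `f` are joined by a
dual path all of whose facets contain `f`. -/
def Normal (C : Finset (Finset V)) : Prop :=
  ∀ f : Finset V, ∀ F ∈ C, ∀ G ∈ C, f ⊆ F → f ⊆ G →
    ∃ P : List (Finset V), P.head? = some F ∧ P.getLast? = some G ∧
      (∀ H ∈ P, H ∈ C ∧ f ⊆ H) ∧ P.Chain' AdjFacets

/-- The (facet set of the) link of a vertex `x` in `C`. -/
def link (C : Finset (Finset V)) (x : V) : Finset (Finset V) :=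
  (C.filter (fun F => x ∈ F)).image (fun F => F.erase x)

/-- Vertex-distance (in the 1-skeleton) between two sets of vertices, with value `⊤`
if one of the sets is empty, and with the special `0/1` convention when the complex
is `0`-dimensional. -/
def vdistSets (C : Finset (Finset V)) (S T : Finset V) : ℕ∞ :=
  if C.sup Finset.card ≤ 1 then
    (if S.Nonempty ∧ T.Nonempty then (if (S ∩ T).Nonempty then 0 else 1) else ⊤)
  else ⨅ u ∈ S, ⨅ v ∈ T, (skeleton C).edist u v

/-- The derived target set `S'` in the link of `x`, used in the recursive definitions
of the vector of distances and of admissibility. -/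
def targetSet (C : Finset (Finset V)) (x : V) (S : Finset V) : Finset V :=
  if x ∈ S then S ∩ verts (link C x)
  else (verts (link C x)).filter
    (fun w => vdistSets C {w} S + 1 = vdistSets C {x} S)

/-- The vector of distances from an ordered facet (a list of vertices) to a target set. -/
def distVector : Finset (Finset V) → List V → Finset V → List ℕ∞
  | _, [], _ => []
  | C, x :: rest, S => vdistSets C {x} S :: distVector (link C x) rest (targetSet C x S)

/-- Admissibility of an ordering of a facet with respect to a target set: the first
vertex realizes the vertex-distance from the facet to the target set, and recursively
in the link. -/
def Admissible : Finset (Finset V) → List V → Finset V → Prop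
  | _, [], _ => True
  | C, x :: rest, S =>
      vdistSets C {x} S = vdistSets C (x :: rest).toFinset S ∧
      Admissible (link C x) rest (targetSet C x S)

/-- An ordered facet of `C`: a repetition-free list of vertices forming a facet. -/
def IsOrderedFacet (C : Finset (Finset V)) (L : List V) : Prop :=
  L.Nodup ∧ L.toFinset ∈ C

/-- A dual path of ordered facets. -/
def IsOrderedDualPath (C : Finset (Finset V)) (Γ : List (List V)) : Prop :=
  (∀ L ∈ Γ, IsOrderedFacet C L) ∧
  Γ.Chain' (fun L M => AdjFacets L.toFinset M.toFinset)

/-- A path of ordered facets is monotone towards `S` if its vectors of distances are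
strictly lexicographically decreasing. -/
def MonotonePath (C : Finset (Finset V)) (S : Finset V) (Γ : List (List V)) : Prop :=
  Γ.Chain' (fun L M => List.Lex (· < ·) (distVector C M S) (distVector C L S))

/-- The index of a step: the least position at which the two orderings differ. -/
def stepIndex (L M : List V) : ℕ := sInf {k : ℕ | L[k]? ≠ M[k]?}

/-- The step from `L` to `M` is conservative towards `S`: the removed vertex is the last
vertex of `L`, and `M` is admissibly ordered with maximum index among all admissible
reorderings. -/
def ConservativeStep (C : Finset (Finset V)) (S : Finset V) (L M : List V) : Prop :=
  (∃ x, L.getLast? = some x ∧ L.toFinset \ M.toFinset = {x}) ∧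
  Admissible C M S ∧
  ∀ M' : List V, M'.Perm M → Admissible C M' S → stepIndex L M' ≤ stepIndex L M

/-- A path of ordered facets is conservative towards `S` if its first facet is
admissibly ordered and every step is conservative. -/
def ConservativePath (C : Finset (Finset V)) (S : Finset V) (Γ : List (List V)) : Prop :=
  (∀ L ∈ Γ.head?, Admissible C L S) ∧ Γ.Chain' (ConservativeStep C S)

/-- A monotone conservative dual path of ordered facets towards `S`. -/
def MonoConsPath (C : Finset (Finset V)) (S : Finset V) (Γ : List (List V)) : Prop :=
  IsOrderedDualPath C Γ ∧ MonotonePath C S Γ ∧ ConservativePath C S Γ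

/-- The path `Γ` starts at the facet `F`. -/
def StartsAt (Γ : List (List V)) (F : Finset V) : Prop :=
  ∃ L, Γ.head? = some L ∧ L.toFinset = F

/-- The path `Γ` ends at the facet `F`. -/
def EndsAt (Γ : List (List V)) (F : Finset V) : Prop :=
  ∃ L, Γ.getLast? = some L ∧ L.toFinset = F

/-- `C` is flag: every set of vertices of `C` pairwise joined by edges of `C` is a face. -/
def Flag (C : Finset (Finset V)) : Prop :=
  ∀ T : Finset V, T ⊆ verts C →
    (∀ u ∈ T, ∀ v ∈ T, u ≠ v → (skeleton C).Adj u v) → IsFace C T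

/-- A critical clique: a clique of the 1-skeleton that becomes a face after removing a
suitable vertex. -/
def CriticalClique (C : Finset (Finset V)) (T : Finset V) : Prop :=
  (∀ u ∈ T, ∀ v ∈ T, u ≠ v → (skeleton C).Adj u v) ∧ ∃ v ∈ T, IsFace C (T.erase v)

/-- `C` is `k`-banner: every critical clique with at least `k + 1` vertices is a face. -/
def Banner (C : Finset (Finset V)) (k : ℕ) : Prop :=
  ∀ T : Finset V, CriticalClique C T → k + 1 ≤ T.card → IsFace C T

/-- A pure `(d-1)`-complex is a pseudomanifold (possibly with boundary) if every
`(d-2)`-dimensional face lies in at most two facets. -/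
def Pseudomanifold (C : Finset (Finset V)) (d : ℕ) : Prop :=
  ∀ f : Finset V, f.card + 1 = d → IsFace C f → (C.filter (fun F => f ⊆ F)).card ≤ 2

/-- A pure `(d-1)`-complex is a pseudomanifold without boundary if every
`(d-2)`-dimensional face lies in exactly two facets. -/
def PseudomanifoldNoBoundary (C : Finset (Finset V)) (d : ℕ) : Prop :=
  ∀ f : Finset V, f.card + 1 = d → IsFace C f → (C.filter (fun F => f ⊆ F)).card = 2

/-- The join of two complexes (given by their facet sets, on disjoint vertex sets). -/
def join (C₁ C₂ : Finset (Finset V)) : Finset (Finset V) :=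
  (C₁ ×ˢ C₂).image (fun p => p.1 ∪ p.2)

/-- The one-point-suspension of `C` at the vertex `v`; the two new suspension vertices
are `Sum.inr false` and `Sum.inr true`. -/
def ops (C : Finset (Finset V)) (v : V) : Finset (Finset (V ⊕ Bool)) :=
  ((C.filter (fun F => v ∈ F)).image
      (fun F => ((F.erase v).image Sum.inl) ∪ {Sum.inr false, Sum.inr true}))
  ∪ ((C.filter (fun F => v ∉ F)).image (fun F => (F.image Sum.inl) ∪ {Sum.inr false}))
  ∪ ((C.filter (fun F => v ∉ F)).image (fun F => (F.image Sum.inl) ∪ {Sum.inr true}))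

/-- The degree of a vertex in the 1-skeleton of `C`. -/
def degree (C : Finset (Finset V)) (x : V) : ℕ :=
  (Finset.univ.filter fun w => (skeleton C).Adj x w).card

/-- Vertex-decomposability of a pure complex given by its facet set: either a single
simplex, or there is a vertex whose deletion stays pure of the same dimension and whose
link and deletion are both vertex-decomposable.  (The condition
`∀ F ∈ C, ∃ G ∈ C, x ∉ G ∧ F.erase x ⊆ G` expresses that the deletion of `x` is pure
of the same dimension, so that its facets are the facets of `C` avoiding `x`.) -/
inductive VertexDecomposable : Finset (Finset V) → Prop
  | simplex (F : Finset V) : VertexDecomposable {F}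
  | step (C : Finset (Finset V)) (x : V) (hx : x ∈ verts C)
      (hdelpure : ∀ F ∈ C, ∃ G ∈ C, x ∉ G ∧ F.erase x ⊆ G)
      (hlink : VertexDecomposable (link C x))
      (hdel : VertexDecomposable (C.filter (fun F => x ∉ F))) :
      VertexDecomposable C

/-- The maximum length (number of steps) of a monotone conservative path in `C`, over
all nonempty target sets of vertices of `C`. -/
def maxl (C : Finset (Finset V)) : ℕ :=
  sSup {n : ℕ | ∃ (S : Finset V) (Γ : List (List V)), S.Nonempty ∧ S ⊆ verts C ∧
    MonoConsPath C S Γ ∧ Γ.length = n + 1}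

/-- `CombSeg C Γ S x₀`: the dual path `Γ` is a combinatorial segment in `C` from its
first facet to the target set `S`, anchored at `x₀` (Adiprasito–Benedetti). -/
inductive CombSeg : Finset (Finset V) → List (Finset V) → Finset V → V → Prop
  | intersects (C : Finset (Finset V)) (F S : Finset V) (x₀ : V)
      (hF : F ∈ C) (hx : x₀ ∈ F) (hFS : (F ∩ S).Nonempty) :
      CombSeg C [F] S x₀
  | dimOne (C : Finset (Finset V)) (S : Finset V) (x₀ v : V)
      (hdim : ∀ F ∈ C, F.card = 1)
      (h₁ : {x₀} ∈ C) (h₂ : {v} ∈ C) (hx : x₀ ∉ S) (hv : v ∈ S) :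
      CombSeg C [{x₀}, {v}] S x₀
  | step (C : Finset (Finset V)) (F₀ : Finset V) (Γ₁ Γ₂ : List (Finset V))
      (Fk S : Finset V) (x₀ y x₀' : V) (ℓ : ℕ∞)
      (hdim : ∀ F ∈ C, 2 ≤ F.card)
      (hmem : ∀ F ∈ F₀ :: Γ₁, F ∈ C)
      (hdisj : ∀ F ∈ F₀ :: Γ₁, F ∩ S = ∅)
      (hℓ : vdistSets C F₀ S = ℓ)
      (hbefore : ∀ F ∈ F₀ :: Γ₁, ¬ vdistSets C F S < ℓ)
      (hafter : vdistSets C Fk S < ℓ)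
      (hy : y ∈ Fk)
      (hyd : vdistSets C {y} S + 1 = ℓ)
      (hyuniq : ∀ z ∈ Fk, vdistSets C {z} S + 1 = ℓ → z = y)
      (hx₀ : ∀ F ∈ F₀ :: Γ₁, x₀ ∈ F) (hx₀k : x₀ ∈ Fk)
      (hlink : CombSeg (link C x₀)
          (((F₀ :: Γ₁) ++ [Fk]).map (fun F => F.erase x₀))
          ((verts (link C x₀)).filter (fun w => vdistSets C {w} S + 1 = ℓ)) x₀')
      (htail : CombSeg C (Fk :: Γ₂) S y) :
      CombSeg C (F₀ :: Γ₁ ++ Fk :: Γ₂) S x₀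

end MCP


/-! Induction on the dimension through links. Write the admissibly ordered facet as
`x :: L`. Since a normal complex has a connected 1-skeleton, `x` is at finite distance
from `S`, so the neighbours of `x` one step closer to `S` form a nonempty target set `S'`
in `lk x`; `L` avoids `S'` and is admissibly ordered towards it. Induction gives a monotone
conservative step `L → L'` in `lk x` that exchanges the last vertex of `L` for some `v`.
If `v` is strictly closer to `S` than `x`, every admissible ordering of `x ∪ L'` starts
closer to `S` than `x`, so one of maximal index will do. Otherwise `x :: L'` is admissible,
decreases in the link, and has maximal index because orderings that do not start with `x`
have index `0`. In dimension `0` the step goes directly to a vertex of `S`. -/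

namespace MCP

variable {V : Type}

section StepIndex

lemma stepIndex_self (L : List V) : stepIndex L L = 0 := by
  simp [stepIndex]

lemma stepIndex_cons_of_ne {a b : V} (A B : List V) (h : a ≠ b) :
    stepIndex (a :: A) (b :: B) = 0 :=
  Nat.sInf_eq_zero.2 (.inl (by simpa using h))

lemma stepIndex_cons_cons (a : V) {A B : List V} (h : A ≠ B) :
    stepIndex (a :: A) (a :: B) = stepIndex A B + 1 := by
  have hne : {k : ℕ | (a :: A)[k]? ≠ (a :: B)[k]?}.Nonempty := by
    by_contra hempty
    refine h (List.ext_getElem? fun i => ?_)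
    by_contra hi
    exact hempty ⟨i + 1, by simpa using hi⟩
  have hpos : 1 ≤ sInf {k : ℕ | (a :: A)[k]? ≠ (a :: B)[k]?} :=
    Nat.one_le_iff_ne_zero.2 fun h0 => (Nat.sInf_eq_zero.1 h0).elim (by simp) hne.ne_empty
  simpa [stepIndex] using (Nat.sInf_add hpos).symm

end StepIndex

variable [DecidableEq V]

section VertexDistance

variable {C : Finset (Finset V)}

lemma vdistSets_of_sup_card_le_one (h : C.sup Finset.card ≤ 1) (S T : Finset V) :
    vdistSets C S T =
      if S.Nonempty ∧ T.Nonempty then (if (S ∩ T).Nonempty then 0 else 1) else ⊤ :=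
  if_pos h

lemma vdistSets_singleton_of_one_lt (h : 1 < C.sup Finset.card) (x : V) (T : Finset V) :
    vdistSets C {x} T = ⨅ v ∈ T, (skeleton C).edist x v := by
  simp [vdistSets, h.not_ge]

lemma vdistSets_le_edist (h : 1 < C.sup Finset.card) (x : V) {T : Finset V} {v : V}
    (hv : v ∈ T) : vdistSets C {x} T ≤ (skeleton C).edist x v := by
  rw [vdistSets_singleton_of_one_lt h]
  exact biInf_le _ hv

lemma vdistSets_le_of_mem {F : Finset V} {u : V} (hu : u ∈ F) (S : Finset V) :
    vdistSets C F S ≤ vdistSets C {u} S := by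
  by_cases h : C.sup Finset.card ≤ 1
  · rw [vdistSets_of_sup_card_le_one h, vdistSets_of_sup_card_le_one h]
    have : ({u} ∩ S).Nonempty → (F ∩ S).Nonempty :=
      .mono (Finset.inter_subset_inter (by simpa using hu) le_rfl)
    split_ifs <;> simp_all
  · simp only [vdistSets, if_neg h]
    exact iInf₂_le_of_le u hu (by simp)

lemma exists_mem_vdistSets_eq {F : Finset V} (hF : F.Nonempty) (S : Finset V) :
    ∃ u ∈ F, vdistSets C F S = vdistSets C {u} S := by
  by_cases h : C.sup Finset.card ≤ 1
  · simp only [vdistSets_of_sup_card_le_one h]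
    by_cases hFS : (F ∩ S).Nonempty
    · obtain ⟨u, hu⟩ := id hFS
      obtain ⟨huF, huS⟩ := Finset.mem_inter.1 hu
      have huS' : ({u} ∩ S).Nonempty := ⟨u, by simpa using huS⟩
      exact ⟨u, huF, by simp [hF, hFS, huS', show S.Nonempty from ⟨u, huS⟩]⟩
    · obtain ⟨u, hu⟩ := id hF
      have huS : ¬ ({u} ∩ S).Nonempty := fun h' =>
        hFS (h'.mono (Finset.inter_subset_inter (by simpa using hu) le_rfl))
      exact ⟨u, hu, by simp [hF, hFS, huS]⟩
  · obtain ⟨u, hu, hmin⟩ := Finset.exists_min_image F (fun u => vdistSets C {u} S) hF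
    refine ⟨u, hu, le_antisymm (vdistSets_le_of_mem hu S) ?_⟩
    simpa [vdistSets, h] using hmin

lemma vdistSets_eq_of_forall_le {F : Finset V} {x : V} (hx : x ∈ F) {S : Finset V}
    (hmin : ∀ u ∈ F, vdistSets C {x} S ≤ vdistSets C {u} S) :
    vdistSets C F S = vdistSets C {x} S := by
  obtain ⟨u, hu, hFu⟩ := exists_mem_vdistSets_eq ⟨x, hx⟩ S
  exact le_antisymm (vdistSets_le_of_mem hx S) (hFu ▸ hmin u hu)

lemma vdistSets_le_add_one_of_adj (h : 1 < C.sup Finset.card) {x w : V}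
    (hxw : (skeleton C).Adj x w) (S : Finset V) :
    vdistSets C {x} S ≤ vdistSets C {w} S + 1 := by
  simp only [vdistSets_singleton_of_one_lt h, ENat.iInf_add]
  refine iInf₂_mono fun v _ => ?_
  calc (skeleton C).edist x v ≤ (skeleton C).edist x w + (skeleton C).edist w v :=
        SimpleGraph.edist_triangle
    _ = (skeleton C).edist w v + 1 := by
        rw [SimpleGraph.edist_eq_one_iff_adj.2 hxw, add_comm]

lemma exists_adj_vdistSets_add_one_eq (h : 1 < C.sup Finset.card) {x : V} {S : Finset V}
    (hxS : x ∉ S) (hfin : vdistSets C {x} S ≠ ⊤) :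
    ∃ w, (skeleton C).Adj x w ∧ vdistSets C {w} S + 1 = vdistSets C {x} S := by
  have hS : S.Nonempty := by
    by_contra hS
    simp [vdistSets_singleton_of_one_lt h, Finset.not_nonempty_iff_eq_empty.1 hS] at hfin
  obtain ⟨s, hs, hmin⟩ := Finset.exists_min_image S ((skeleton C).edist x) hS
  have hxs : vdistSets C {x} S = (skeleton C).edist x s :=
    le_antisymm (vdistSets_le_edist h x hs)
      (by rw [vdistSets_singleton_of_one_lt h]; exact le_iInf₂ hmin)
  obtain ⟨p, hp⟩ := SimpleGraph.exists_walk_of_edist_ne_top (hxs ▸ hfin)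
  cases p with
  | nil => exact absurd hs hxS
  | @cons _ w _ hxw q =>
    refine ⟨w, hxw, le_antisymm ?_ (vdistSets_le_add_one_of_adj h hxw S)⟩
    calc vdistSets C {w} S + 1 ≤ q.length + 1 := by
          gcongr
          exact (vdistSets_le_edist h w hs).trans (SimpleGraph.edist_le q)
      _ = vdistSets C {x} S := by rw [hxs, ← hp]; simp

end VertexDistance

section Link

variable {C : Finset (Finset V)} {x : V}

lemma mem_link_iff {f : Finset V} : f ∈ link C x ↔ ∃ F ∈ C, x ∈ F ∧ F.erase x = f := by
  simp [link, and_assoc]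

lemma erase_mem_link {F : Finset V} (hF : F ∈ C) (hx : x ∈ F) : F.erase x ∈ link C x :=
  mem_link_iff.2 ⟨F, hF, hx, rfl⟩

lemma insert_mem_of_mem_link {f : Finset V} (hf : f ∈ link C x) : insert x f ∈ C ∧ x ∉ f := by
  obtain ⟨F, hF, hx, rfl⟩ := mem_link_iff.1 hf
  simpa [Finset.insert_erase hx] using hF

lemma pure_link {d : ℕ} (h : Pure C (d + 1)) (x : V) : Pure (link C x) d := by
  rintro _ hf
  obtain ⟨F, hF, hx, rfl⟩ := mem_link_iff.1 hf
  simp [Finset.card_erase_of_mem hx, h F hF]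

lemma mem_verts_link_of_adj {w : V} (hxw : (skeleton C).Adj x w) : w ∈ verts (link C x) := by
  obtain ⟨hne, F, hF, hxF, hwF⟩ := hxw
  exact Finset.mem_sup.2 ⟨_, erase_mem_link hF hxF, Finset.mem_erase.2 ⟨hne.symm, hwF⟩⟩

lemma IsOrderedFacet.link {L : List V} (h : IsOrderedFacet C (x :: L)) :
    IsOrderedFacet (link C x) L := by
  obtain ⟨hnd, hC⟩ := h
  rw [List.nodup_cons] at hnd
  refine ⟨hnd.2, ?_⟩
  simpa [Finset.erase_insert (List.mem_toFinset.not.2 hnd.1)] using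
    erase_mem_link hC (List.mem_toFinset.2 List.mem_cons_self)

lemma adjFacets_erase {A B : Finset V} (hxA : x ∈ A) (hxB : x ∈ B) (h : AdjFacets A B) :
    AdjFacets (A.erase x) (B.erase x) := by
  obtain ⟨hne, hcard, hint⟩ := h
  refine ⟨fun he => hne ?_, ?_, ?_⟩
  · rw [← Finset.insert_erase hxA, ← Finset.insert_erase hxB, he]
  · rw [Finset.card_erase_of_mem hxA, Finset.card_erase_of_mem hxB, hcard]
  · rw [Finset.erase_inter, Finset.inter_erase, Finset.erase_idem,
      Finset.card_erase_of_mem (Finset.mem_inter.2 ⟨hxA, hxB⟩),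
      Finset.card_erase_of_mem hxA]
    have : 0 < (A ∩ B).card := Finset.card_pos.2 ⟨x, Finset.mem_inter.2 ⟨hxA, hxB⟩⟩
    omega

/-- A dual path through the facets containing `insert x f` erases to one in the link. -/
lemma normal_link (h : Normal C) (x : V) : Normal (link C x) := by
  intro f F hF G hG hfF hfG
  obtain ⟨F', hF', hxF', rfl⟩ := mem_link_iff.1 hF
  obtain ⟨G', hG', hxG', rfl⟩ := mem_link_iff.1 hG
  have hxf : x ∉ f := fun hxf => Finset.notMem_erase x F' (hfF hxf)
  obtain ⟨P, hhead, hlast, hmem, hchain⟩ := h (insert x f) F' hF' G' hG'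
    (Finset.insert_subset hxF' (hfF.trans (Finset.erase_subset x F')))
    (Finset.insert_subset hxG' (hfG.trans (Finset.erase_subset x G')))
  refine ⟨P.map (·.erase x), by simp [hhead], by simp [hlast], ?_, ?_⟩
  · simp only [List.mem_map, forall_exists_index, and_imp]
    rintro _ H hH rfl
    obtain ⟨hHC, hfH⟩ := hmem H hH
    refine ⟨erase_mem_link hHC (hfH (Finset.mem_insert_self x f)), fun a ha => ?_⟩
    exact Finset.mem_erase.2 ⟨ne_of_mem_of_not_mem ha hxf, hfH (Finset.mem_insert_of_mem ha)⟩
  · refine List.isChain_map_of_isChain _ (fun A B hAB => ?_) (List.IsChain.iff_mem.1 hchain)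
    obtain ⟨hA, hB, hAB⟩ := hAB
    exact adjFacets_erase ((hmem A hA).2 (Finset.mem_insert_self x f))
      ((hmem B hB).2 (Finset.mem_insert_self x f)) hAB

end Link

section Connectivity

variable {C : Finset (Finset V)}

lemma reachable_of_mem_facet {F : Finset V} (hF : F ∈ C) {u v : V} (hu : u ∈ F) (hv : v ∈ F) :
    (skeleton C).Reachable u v := by
  by_cases huv : u = v
  · exact huv ▸ .refl u
  · exact SimpleGraph.Adj.reachable ⟨huv, F, hF, hu, hv⟩

/-- Facets adjacent in the dual graph share a vertex once they have at least two. -/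
lemma reachable_of_mem_verts (hn : Normal C) (hdim : ∀ F ∈ C, 2 ≤ F.card) {u v : V}
    (hu : u ∈ verts C) (hv : v ∈ verts C) : (skeleton C).Reachable u v := by
  obtain ⟨F, hF, huF⟩ := Finset.mem_sup.1 hu
  obtain ⟨G, hG, hvG⟩ := Finset.mem_sup.1 hv
  obtain ⟨P, hhead, hlast, hmem, hchain⟩ :=
    hn ∅ F hF G hG (Finset.empty_subset _) (Finset.empty_subset _)
  have hreach : ∀ H ∈ P, ∀ w ∈ H, (skeleton C).Reachable u w := by
    refine (List.IsChain.iff_mem.1 hchain).induction _ _ ?_ ?_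
    · rintro A B ⟨hA, hB, -, -, hAB⟩ hreachA w hw
      obtain ⟨z, hz⟩ : (A ∩ B).Nonempty := by
        rw [← Finset.card_pos]
        have := hdim A (hmem A hA).1
        omega
      exact (hreachA z (Finset.mem_inter.1 hz).1).trans
        (reachable_of_mem_facet (hmem B hB).1 (Finset.mem_inter.1 hz).2 hw)
    · intro hP w hw
      rw [List.head?_eq_some_head hP, Option.some.injEq] at hhead
      exact reachable_of_mem_facet hF huF (hhead ▸ hw)
  exact hreach G (List.mem_of_getLast? hlast) v hvG

lemma vdistSets_ne_top (hn : Normal C) (hdim : ∀ F ∈ C, 2 ≤ F.card) (h : 1 < C.sup Finset.card)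
    {x : V} (hx : x ∈ verts C) {S : Finset V} {s : V} (hs : s ∈ S) (hsv : s ∈ verts C) :
    vdistSets C {x} S ≠ ⊤ :=
  ne_top_of_le_ne_top
    (SimpleGraph.edist_ne_top_iff_reachable.2 (reachable_of_mem_verts hn hdim hx hsv))
    (vdistSets_le_edist h x hs)

end Connectivity

section TargetSet

variable {C : Finset (Finset V)} {x : V} {S : Finset V}

lemma targetSet_of_notMem (hxS : x ∉ S) :
    targetSet C x S =
      (verts (link C x)).filter (fun w => vdistSets C {w} S + 1 = vdistSets C {x} S) :=
  if_neg hxS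

lemma targetSet_subset_verts_link (hxS : x ∉ S) : targetSet C x S ⊆ verts (link C x) := by
  rw [targetSet_of_notMem hxS]
  exact Finset.filter_subset _ _

lemma targetSet_nonempty (h : 1 < C.sup Finset.card) (hxS : x ∉ S)
    (hfin : vdistSets C {x} S ≠ ⊤) : (targetSet C x S).Nonempty := by
  obtain ⟨w, hxw, hw⟩ := exists_adj_vdistSets_add_one_eq h hxS hfin
  exact ⟨w, by simpa [targetSet_of_notMem hxS, hw] using mem_verts_link_of_adj hxw⟩

lemma notMem_targetSet_of_le (hxS : x ∉ S) (hfin : vdistSets C {x} S ≠ ⊤) {z : V}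
    (hle : vdistSets C {x} S ≤ vdistSets C {z} S) : z ∉ targetSet C x S := by
  rw [targetSet_of_notMem hxS, Finset.mem_filter]
  rintro ⟨-, hz⟩
  have hzfin : vdistSets C {z} S ≠ ⊤ := fun hz' => hfin (by simp [← hz, hz'])
  exact (ENat.add_one_le_iff hzfin).1 (hz ▸ hle) |>.false

end TargetSet

section Admissible

lemma exists_perm_admissible :
    ∀ (C : Finset (Finset V)) (S : Finset V) (L : List V), ∃ M, M.Perm L ∧ Admissible C M S
  | _, _, [] => ⟨[], .nil, trivial⟩
  | C, S, a :: L => by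
    obtain ⟨u, hu', hud⟩ := exists_mem_vdistSets_eq (C := C) ⟨a, List.mem_toFinset.2 (.head L)⟩ S
    have hu : u ∈ a :: L := List.mem_toFinset.1 hu'
    obtain ⟨M, hMp, hMa⟩ := exists_perm_admissible (link C u) (targetSet C u S) ((a :: L).erase u)
    have hperm : (u :: M).Perm (a :: L) := (hMp.cons u).trans (List.perm_cons_erase hu).symm
    exact ⟨u :: M, hperm, by rw [List.toFinset_eq_of_perm _ _ hperm]; exact hud.symm, hMa⟩
termination_by _ _ L => L.length
decreasing_by rw [List.length_erase_of_mem hu]; simp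

def IsMaxIndexAdmissible (C : Finset (Finset V)) (S : Finset V) (L M : List V) : Prop :=
  Admissible C M S ∧ ∀ N : List V, N.Perm M → Admissible C N S → stepIndex L N ≤ stepIndex L M

lemma exists_perm_isMaxIndexAdmissible (C : Finset (Finset V)) (S : Finset V) (L base : List V) :
    ∃ M, M.Perm base ∧ IsMaxIndexAdmissible C S L M := by
  set adm := base.permutations.toFinset.filter (Admissible C · S)
  have hmem : ∀ {N}, N ∈ adm ↔ N.Perm base ∧ Admissible C N S := by simp [adm]
  obtain ⟨M₀, hM₀⟩ := exists_perm_admissible C S base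
  obtain ⟨M, hM, hmax⟩ := adm.exists_max_image (stepIndex L) ⟨M₀, hmem.2 hM₀⟩
  obtain ⟨hMp, hMa⟩ := hmem.1 hM
  exact ⟨M, hMp, hMa, fun N hNp hNa => hmax N (hmem.2 ⟨hNp.trans hMp, hNa⟩)⟩

lemma IsMaxIndexAdmissible.cons {C : Finset (Finset V)} {S : Finset V} {x : V} {L M : List V}
    (h : IsMaxIndexAdmissible (link C x) (targetSet C x S) L M) (hLM : L ≠ M)
    (hx : vdistSets C {x} S = vdistSets C (x :: M).toFinset S) :
    IsMaxIndexAdmissible C S (x :: L) (x :: M) := by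
  refine ⟨⟨hx, h.1⟩, ?_⟩
  rintro (_ | ⟨u, N⟩) hNp hNa
  · exact absurd hNp.length_eq (by simp)
  by_cases hux : u = x
  · subst hux
    by_cases hLN : L = N
    · rw [hLN, stepIndex_self]
      exact Nat.zero_le _
    rw [stepIndex_cons_cons _ hLN, stepIndex_cons_cons _ hLM]
    exact Nat.add_le_add_right (h.2 N hNp.cons_inv hNa.2) 1
  · rw [stepIndex_cons_of_ne _ _ (Ne.symm hux)]
    exact Nat.zero_le _

end Admissible

section Step

variable {C : Finset (Finset V)} {S : Finset V}

def IsMonotoneConservativeStep (C : Finset (Finset V)) (S : Finset V) (L M : List V) : Prop :=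
  ∃ v ∉ L, M.Perm (L.dropLast ++ [v]) ∧ M.toFinset ∈ C ∧
    List.Lex (· < ·) (distVector C M S) (distVector C L S) ∧ IsMaxIndexAdmissible C S L M

lemma exists_isMonotoneConservativeStep_singleton (hpure : Pure C 1) {s : V} (hs : s ∈ S)
    (hsv : s ∈ verts C) {x : V} (hxS : x ∉ S) :
    ∃ M, IsMonotoneConservativeStep C S [x] M := by
  have hdim : C.sup Finset.card ≤ 1 := Finset.sup_le fun F hF => (hpure F hF).le
  obtain ⟨F, hF, hsF⟩ := Finset.mem_sup.1 hsv
  have hFs : F = {s} := Finset.eq_singleton_iff_unique_mem.2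
    ⟨hsF, fun t ht => Finset.card_le_one.1 (hpure F hF).le t ht s hsF⟩
  have hxs : {x} ∩ S = ∅ := Finset.singleton_inter_of_notMem hxS
  refine ⟨[s], s, by simpa using ne_of_mem_of_not_mem hs hxS, by simp, by simpa [← hFs],
    ?_, ⟨by simp, trivial⟩, fun N hN _ => by rw [List.perm_singleton.1 hN]⟩
  have hS : S.Nonempty := ⟨s, hs⟩
  have hsS : ({s} ∩ S).Nonempty := ⟨s, by simpa using hs⟩
  simp [distVector, vdistSets_of_sup_card_le_one hdim, hS, hsS, hxs]

lemma IsMonotoneConservativeStep.cons {x : V} {L M' : List V} (hL : L ≠ [])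
    (hx : vdistSets C {x} S = vdistSets C (x :: L).toFinset S)
    (h : IsMonotoneConservativeStep (link C x) (targetSet C x S) L M') :
    ∃ M, IsMonotoneConservativeStep C S (x :: L) M := by
  obtain ⟨v, hvL, hperm, hM'C, hlex, hmax⟩ := h
  obtain ⟨hxM'C, hxM'⟩ := insert_mem_of_mem_link hM'C
  have hvM' : v ∈ M' := hperm.mem_iff.2 (by simp)
  have hvxL : v ∉ x :: L := by
    simpa [hvL] using ne_of_mem_of_not_mem (List.mem_toFinset.2 hvM') hxM'
  have hpermx : (x :: M').Perm ((x :: L).dropLast ++ [v]) := by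
    simpa [List.dropLast_cons_of_ne_nil hL] using hperm.cons x
  have hfacet : (x :: M').toFinset ∈ C := by simpa using hxM'C
  by_cases hvx : vdistSets C {v} S < vdistSets C {x} S
  · obtain ⟨_ | ⟨m, M⟩, hMp, hMmax⟩ := exists_perm_isMaxIndexAdmissible C S (x :: L) (x :: M')
    · exact absurd hMp.length_eq (by simp)
    have hm : vdistSets C {m} S ≤ vdistSets C {v} S := by
      rw [hMmax.1.1, List.toFinset_eq_of_perm _ _ hMp]
      exact vdistSets_le_of_mem (by simp [hvM']) S
    exact ⟨m :: M, v, hvxL, hMp.trans hpermx, List.toFinset_eq_of_perm _ _ hMp ▸ hfacet,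
      .rel (hm.trans_lt hvx), hMmax⟩
  · have hxmin : ∀ u ∈ (x :: M').toFinset, vdistSets C {x} S ≤ vdistSets C {u} S := by
      intro u hu
      rw [List.mem_toFinset, (hperm.cons x).mem_iff] at hu
      rcases List.mem_cons.1 hu with rfl | hu
      · exact le_rfl
      rcases List.mem_append.1 hu with hu | hu
      · rw [hx]
        exact vdistSets_le_of_mem (by simpa using .inr (List.dropLast_subset L hu)) S
      · exact (List.mem_singleton.1 hu ▸ not_lt.1 hvx)
    exact ⟨x :: M', v, hvxL, hpermx, hfacet, .cons hlex,
      hmax.cons (fun hLM => hvL (hLM ▸ hvM')) (vdistSets_eq_of_forall_le (by simp) hxmin).symm⟩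

theorem exists_isMonotoneConservativeStep {L : List V} (hL : L ≠ []) (hLC : IsOrderedFacet C L)
    (hpure : Pure C L.length) (hn : Normal C) {s : V} (hs : s ∈ S) (hsv : s ∈ verts C)
    (hLS : ∀ x ∈ L, x ∉ S) (hadm : Admissible C L S) :
    ∃ M, IsMonotoneConservativeStep C S L M := by
  induction L generalizing C S s with
  | nil => exact absurd rfl hL
  | cons x L ih =>
    have hxS : x ∉ S := hLS x List.mem_cons_self
    rcases eq_or_ne L [] with rfl | hL
    · exact exists_isMonotoneConservativeStep_singleton hpure hs hsv hxS
    have hdim : ∀ F ∈ C, 2 ≤ F.card := fun F hF => by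
      simpa [hpure F hF, Nat.one_le_iff_ne_zero] using hL
    have hbig : 1 < C.sup Finset.card := hdim _ hLC.2 |>.trans (Finset.le_sup hLC.2)
    have hfin : vdistSets C {x} S ≠ ⊤ :=
      vdistSets_ne_top hn hdim hbig (Finset.mem_sup.2 ⟨_, hLC.2, by simp⟩) hs hsv
    obtain ⟨s', hs'⟩ := targetSet_nonempty hbig hxS hfin
    have hLS' : ∀ z ∈ L, z ∉ targetSet C x S := fun z hz =>
      notMem_targetSet_of_le hxS hfin
        (hadm.1 ▸ vdistSets_le_of_mem (List.mem_toFinset.2 (.tail x hz)) S)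
    obtain ⟨M', hM'⟩ := ih hL hLC.link (pure_link hpure x) (normal_link hn x) hs'
      (targetSet_subset_verts_link hxS hs') hLS' hadm.2
    exact hM'.cons hL hadm.1

lemma adjFacets_insert_insert {A : Finset V} {g v : V} (hg : g ∉ A) (hv : v ∉ A) (hgv : g ≠ v) :
    AdjFacets (insert g A) (insert v A) := by
  have hinter : insert g A ∩ insert v A = A := by grind
  refine ⟨fun h => hgv ?_, by simp [hg, hv], by simp [hinter, hg]⟩
  have hgv' : g ∈ insert v A := h ▸ Finset.mem_insert_self g A
  simpa [hg] using hgv'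

theorem IsMonotoneConservativeStep.conservative {L M : List V} (hL : IsOrderedFacet C L)
    (hne : L ≠ []) (hadm : Admissible C L S) (h : IsMonotoneConservativeStep C S L M) :
    IsOrderedFacet C M ∧ AdjFacets L.toFinset M.toFinset ∧ MonotonePath C S [L, M] ∧
      ConservativePath C S [L, M] := by
  obtain ⟨v, hvL, hperm, hMC, hlex, hmax⟩ := h
  obtain ⟨L, g, rfl⟩ : ∃ L g, L ++ [g] = _ := ⟨_, _, List.dropLast_append_getLast hne⟩
  rw [List.dropLast_concat] at hperm
  obtain ⟨hgL, hLnd⟩ := (List.nodup_concat L g).1 (by simpa using hL.1)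
  have hvL' : v ∉ L ∧ v ≠ g := by simpa [not_or] using hvL
  have hM : M.toFinset = insert v L.toFinset := by simp [List.toFinset_eq_of_perm _ _ hperm]
  have hLg : (L ++ [g]).toFinset = insert g L.toFinset := by simp
  have hMnd : M.Nodup := hperm.nodup_iff.2 (by simpa using (List.nodup_concat L v).2 ⟨hvL'.1, hLnd⟩)
  refine ⟨⟨hMnd, hMC⟩, ?_, List.isChain_pair.2 hlex, by simpa using hadm,
    List.isChain_pair.2 ⟨⟨g, by simp, ?_⟩, hmax⟩⟩
  · rw [hM, hLg]
    exact adjFacets_insert_insert (by simpa using hgL) (by simpa using hvL'.1) hvL'.2.symm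
  · ext u
    simp only [hM, hLg, Finset.mem_sdiff, Finset.mem_insert, List.mem_toFinset,
      Finset.mem_singleton]
    grind

end Step

end MCP

open MCP in
theorem statement0_general {V : Type} [DecidableEq V] (d : ℕ)
    (C : Finset (Finset V)) (hpure : Pure C d) (hnormal : Normal C)
    (S : Finset V) (hS : S.Nonempty) (hSv : S ⊆ verts C)
    (F₀ : List V) (hF₀ : IsOrderedFacet C F₀)
    (hdisj : F₀.toFinset ∩ S = ∅) (hadm : Admissible C F₀ S) :
    ∃ F₁ : List V, IsOrderedFacet C F₁ ∧ AdjFacets F₀.toFinset F₁.toFinset ∧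
      MonotonePath C S [F₀, F₁] ∧ ConservativePath C S [F₀, F₁] := by
  obtain ⟨s, hs⟩ := hS
  obtain ⟨F, hF, hsF⟩ := Finset.mem_sup.1 (hSv hs)
  have hlen : F₀.length = d := (List.toFinset_card_of_nodup hF₀.1).symm.trans (hpure _ hF₀.2)
  have hne : F₀ ≠ [] := by
    rintro rfl
    have hF0 : F.card = 0 := (hpure F hF).trans hlen.symm
    simp [Finset.card_eq_zero.1 hF0] at hsF
  have hF₀S : ∀ x ∈ F₀, x ∉ S := fun x hx hxS =>
    Finset.notMem_empty x (hdisj ▸ Finset.mem_inter.2 ⟨List.mem_toFinset.2 hx, hxS⟩)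
  obtain ⟨F₁, hF₁⟩ := exists_isMonotoneConservativeStep hne hF₀ (hlen ▸ hpure) hnormal hs
    (hSv hs) hF₀S hadm
  exact ⟨F₁, hF₁.conservative hF₀ hne hadm⟩

open MCP in
/-- existence of a monotone conservative step:
in a pure normal complex, from an admissibly ordered facet disjoint from the nonempty
target set `S`, there is an adjacent ordered facet giving a monotone conservative step. -/
theorem statement0 {V : Type} [DecidableEq V] [Fintype V] (d : ℕ)
    (C : Finset (Finset V)) (hpure : Pure C d) (hnormal : Normal C)
    (S : Finset V) (hS : S.Nonempty) (hSv : S ⊆ verts C)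
    (F₀ : List V) (hF₀ : IsOrderedFacet C F₀)
    (hdisj : F₀.toFinset ∩ S = ∅) (hadm : Admissible C F₀ S) :
    ∃ F₁ : List V, IsOrderedFacet C F₁ ∧ AdjFacets F₀.toFinset F₁.toFinset ∧
      MonotonePath C S [F₀, F₁] ∧ ConservativePath C S [F₀, F₁] :=
  statement0_general d C hpure hnormal S hS hSv F₀ hF₀ hdisj hadm
end
end

section
/- Let k≥2, let C be a pure simplicial complex, and let x be a vertex of C. If C is k-banner, then the link lk_C(x) is (k−1)-banner. -/
/-! Common definitions: pure simplicial complexes (represented by their facet sets),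
vertex-distance, links, ordered facets, vectors of distances, admissibility, and
monotone/conservative dual paths, following Adiprasito–Benedetti's combinatorial
segments. -/

open scoped Classical

noncomputable section

/-! A critical clique `T` of `lk_C(x)` with at least two vertices cones off to the critical
clique `T ∪ {x}` of `C`, which has at least `k + 1` vertices and is therefore a face of `C`;
so `T` is a face of the link. -/

namespace MCP

variable {V : Type} [DecidableEq V] {C : Finset (Finset V)} {x u v : V}

theorem mem_link {G : Finset V} : G ∈ link C x ↔ ∃ F ∈ C, x ∈ F ∧ F.erase x = G := by
  simp only [link, Finset.mem_image, Finset.mem_filter, and_assoc]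

theorem isFace_link_iff {f : Finset V} : IsFace (link C x) f ↔ x ∉ f ∧ IsFace C (insert x f) := by
  constructor
  · rintro ⟨G, hG, hfG⟩
    obtain ⟨F, hF, hxF, rfl⟩ := mem_link.1 hG
    exact ⟨fun hxf => Finset.notMem_erase x F (hfG hxf),
      F, hF, Finset.insert_subset hxF (hfG.trans (Finset.erase_subset x F))⟩
  · rintro ⟨hxf, F, hF, hfF⟩
    refine ⟨F.erase x, mem_link.2 ⟨F, hF, hfF (Finset.mem_insert_self x f), rfl⟩, ?_⟩
    exact fun u hu => Finset.mem_erase.2 ⟨ne_of_mem_of_not_mem hu hxf,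
      hfF (Finset.mem_insert_of_mem hu)⟩

theorem adj_of_adj_link (h : (skeleton (link C x)).Adj u v) :
    (skeleton C).Adj u v ∧ (skeleton C).Adj x u := by
  obtain ⟨huv, G, hG, huG, hvG⟩ := h
  obtain ⟨F, hF, hxF, rfl⟩ := mem_link.1 hG
  obtain ⟨hux, huF⟩ := Finset.mem_erase.1 huG
  exact ⟨⟨huv, F, hF, huF, Finset.mem_of_mem_erase hvG⟩, ⟨hux.symm, F, hF, hxF, huF⟩⟩

/-- Two vertices are needed so that every vertex of `T` lies on an edge of the link, hence
is joined to `x`. -/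
theorem criticalClique_insert_of_link {T : Finset V} (hT : CriticalClique (link C x) T)
    (hcard : 2 ≤ T.card) : x ∉ T ∧ CriticalClique C (insert x T) := by
  obtain ⟨hclique, v, hvT, hface⟩ := hT
  have hadj : ∀ u ∈ T, (skeleton C).Adj x u := fun u hu => by
    obtain ⟨w, hwT, hwu⟩ := Finset.exists_mem_ne (s := T) (by omega) u
    exact (adj_of_adj_link (hclique u hu w hwT hwu.symm)).2
  have hxT : x ∉ T := fun hx => (hadj x hx).ne rfl
  refine ⟨hxT, ?_, v, Finset.mem_insert_of_mem hvT, ?_⟩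
  · intro a ha b hb hab
    rcases Finset.mem_insert.1 ha with rfl | haT <;> rcases Finset.mem_insert.1 hb with rfl | hbT
    · exact absurd rfl hab
    · exact hadj b hbT
    · exact (hadj a haT).symm
    · exact (adj_of_adj_link (hclique a haT b hbT hab)).1
  · rw [Finset.erase_insert_of_ne (ne_of_mem_of_not_mem hvT hxT).symm]
    exact (isFace_link_iff.1 hface).2

end MCP

open MCP in
theorem statement14_general {V : Type} [DecidableEq V] (k : ℕ) (hk : 2 ≤ k)
    (C : Finset (Finset V))
    (x : V) (hb : Banner C k) :
    Banner (link C x) (k - 1) := by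
  intro T hT hcard
  obtain ⟨hxT, hcone⟩ := criticalClique_insert_of_link hT (by omega)
  have hcone_card : k + 1 ≤ (insert x T).card := by
    rw [Finset.card_insert_of_notMem hxT]
    omega
  exact isFace_link_iff.2 ⟨hxT, hb _ hcone hcone_card⟩

open MCP in
/-- the link of a vertex of a `k`-banner pure complex is
`(k-1)`-banner. -/
theorem statement14 {V : Type} [DecidableEq V] [Fintype V] (d k : ℕ) (hk : 2 ≤ k)
    (C : Finset (Finset V)) (hpure : Pure C d)
    (x : V) (hx : x ∈ verts C) (hb : Banner C k) :
    Banner (link C x) (k - 1) :=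
  statement14_general k hk C x hb
end
end
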